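/- arXiv:1808.03905 — 6 statements merged into one kernel-verified Lean document; each statement's English description precedes it below -/
import Mathlib

section
/- If R is a Γ-graded von Neumann regular graded right self-injective ring, then its degree-zero component R_0 is a von Neumann regular right self-injective ring. -/
/- Setting: `Γ = ι` an additive abelian group, `R` a `ι`-graded ring with identity,
with homogeneous components the additive subgroups `𝒜 γ`. -/

variable {ι R : Type*}

section Defs
variable [DecidableEq ι] [AddCommGroup ι] [Ring R] (𝒜 : ι → AddSubgroup R) [GradedRing 𝒜]

/-- An element of `R` is homogeneous if it lies in some component `𝒜 γ`. -/
def IsHomog (a : R) : Prop := ∃ γ : ι, a ∈ 𝒜 γ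

/-- `R` is graded von Neumann regular: every homogeneous element has an inner inverse. -/
def GradedVNRegular : Prop := ∀ a : R, IsHomog 𝒜 a → ∃ b : R, a * b * a = a

/-- A subset of `R` is a right ideal. -/
def IsRightIdealSet (I : Set R) : Prop :=
  (0 : R) ∈ I ∧ (∀ x ∈ I, ∀ y ∈ I, x + y ∈ I) ∧ ∀ x ∈ I, ∀ r : R, x * r ∈ I

/-- A graded right ideal: a right ideal containing all homogeneous components of
its elements. -/
def IsGradedRightIdeal (I : Set R) : Prop :=
  IsRightIdealSet I ∧ ∀ x ∈ I, ∀ γ : ι, ((DirectSum.decompose 𝒜 x γ : 𝒜 γ) : R) ∈ I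

/-- `A` is graded essential in `B` (as graded right ideals): `A ⊆ B` and every nonzero
graded right ideal contained in `B` meets `A` nontrivially. -/
def GradedEssentialIn (A B : Set R) : Prop :=
  A ⊆ B ∧ ∀ J : Set R, IsGradedRightIdeal 𝒜 J → J ⊆ B → (∃ x ∈ J, x ≠ 0) →
    ∃ x, x ∈ A ∩ J ∧ x ≠ 0

/-- Graded Baer criterion: `R` is graded right self-injective. A homomorphism from a
graded right ideal `I` to `R` is encoded as a function `f : R → R` which is additive on
`I`, right `R`-linear on `I`, and of degree `γ` on `I`. -/
def GradedSelfInjective : Prop :=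
  ∀ I : Set R, IsGradedRightIdeal 𝒜 I → ∀ γ : ι, ∀ f : R → R,
    (∀ x ∈ I, ∀ y ∈ I, f (x + y) = f x + f y) →
    (∀ x ∈ I, ∀ r : R, f (x * r) = f x * r) →
    (∀ δ : ι, ∀ x ∈ I, x ∈ 𝒜 δ → f x ∈ 𝒜 (γ + δ)) →
    ∃ c ∈ 𝒜 γ, ∀ x ∈ I, f x = c * x

/-- The degree-zero component `R₀ = 𝒜 0` is a von Neumann regular ring. -/
def ZeroRegular : Prop := ∀ a ∈ 𝒜 (0 : ι), ∃ b ∈ 𝒜 (0 : ι), a * b * a = a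

/-- A right ideal of the ring `R₀ = 𝒜 0`, encoded as a subset of `R`. -/
def IsRightIdealOfZero (I : Set R) : Prop :=
  I ⊆ (𝒜 (0 : ι) : Set R) ∧ (0 : R) ∈ I ∧ (∀ x ∈ I, ∀ y ∈ I, x + y ∈ I) ∧
    ∀ x ∈ I, ∀ r ∈ 𝒜 (0 : ι), x * r ∈ I

/-- Baer criterion for the ring `R₀ = 𝒜 0`: `R₀` is right self-injective. -/
def ZeroSelfInjective : Prop :=
  ∀ I : Set R, IsRightIdealOfZero 𝒜 I → ∀ f : R → R,
    (∀ x ∈ I, f x ∈ 𝒜 (0 : ι)) →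
    (∀ x ∈ I, ∀ y ∈ I, f (x + y) = f x + f y) →
    (∀ x ∈ I, ∀ r ∈ 𝒜 (0 : ι), f (x * r) = f x * r) →
    ∃ c ∈ 𝒜 (0 : ι), ∀ x ∈ I, f x = c * x

end Defs

/-!
Every element `x` of a right ideal `I` of the von Neumann regular ring `R₀` has a left unit
`x b ∈ I`, and any two elements of `I` have a common one. Hence `f : I → R₀` extends to the
graded right ideal `J = {y | e y = y for some e ∈ I} = I R` by `F y = f(e) y`: this does not
depend on the choice of `e`, because `f(e) y = f(g e) y = f(g) y` for a common left unit `g`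
of `e` and `e'`. Since `e ∈ R₀`, the ideal `J` is graded and `F` has degree `0`, so graded
self-injectivity gives `c ∈ R₀` with `f x = F x = c x` on `I`.
-/

section LeftUnits

def leftFixedBy [Mul R] (I : Set R) : Set R := {y | ∃ e ∈ I, e * y = y}

noncomputable def extendAlongLeftUnits [MulZeroClass R] (I : Set R) (f : R → R) (y : R) : R :=
  open Classical in
  if h : ∃ e ∈ I, e * y = y then f h.choose * y else 0

variable [Ring R] {I : NonUnitalSubring R}

theorem NonUnitalSubring.exists_common_left_unit (hI : ∀ x ∈ I, ∃ e ∈ I, e * x = x)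
    {a b : R} (ha : a ∈ I) (hb : b ∈ I) : ∃ g ∈ I, g * a = a ∧ g * b = b := by
  obtain ⟨e, heI, hea⟩ := hI a ha
  -- a left unit `u` of the defect `b - e b` corrects `e` to a left unit of both
  obtain ⟨u, huI, hu⟩ := hI (b - e * b) (I.sub_mem hb (I.mul_mem heI hb))
  refine ⟨e + u - u * e, I.sub_mem (I.add_mem heI huI) (I.mul_mem huI heI), ?_, ?_⟩
  · rw [sub_mul, add_mul, mul_assoc, hea]
    abel
  · calc (e + u - u * e) * b = e * b + u * (b - e * b) := by noncomm_ring
      _ = b := by rw [hu]; abel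

theorem exists_common_left_unit_of_mem_leftFixedBy (hI : ∀ x ∈ I, ∃ e ∈ I, e * x = x)
    {y z : R} (hy : y ∈ leftFixedBy (I : Set R)) (hz : z ∈ leftFixedBy (I : Set R)) :
    ∃ g ∈ I, g * y = y ∧ g * z = z := by
  obtain ⟨e, heI, hey⟩ := hy
  obtain ⟨e', he'I, he'z⟩ := hz
  obtain ⟨g, hgI, hge, hge'⟩ := NonUnitalSubring.exists_common_left_unit hI heI he'I
  exact ⟨g, hgI, by rw [← hey, ← mul_assoc, hge], by rw [← he'z, ← mul_assoc, hge']⟩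

theorem leftFixedBy_add_mem (hI : ∀ x ∈ I, ∃ e ∈ I, e * x = x) {y z : R}
    (hy : y ∈ leftFixedBy (I : Set R)) (hz : z ∈ leftFixedBy (I : Set R)) :
    y + z ∈ leftFixedBy (I : Set R) := by
  obtain ⟨g, hgI, hgy, hgz⟩ := exists_common_left_unit_of_mem_leftFixedBy hI hy hz
  exact ⟨g, hgI, by rw [mul_add, hgy, hgz]⟩

variable {f : R → R}

theorem extendAlongLeftUnits_eq (hI : ∀ x ∈ I, ∃ e ∈ I, e * x = x)
    (hf : ∀ x ∈ I, ∀ y ∈ I, f (x * y) = f x * y) {e y : R} (heI : e ∈ I) (hey : e * y = y) :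
    extendAlongLeftUnits (I : Set R) f y = f e * y := by
  have hex : ∃ e ∈ (I : Set R), e * y = y := ⟨e, heI, hey⟩
  rw [extendAlongLeftUnits, dif_pos hex]
  obtain ⟨he'I, he'y⟩ := hex.choose_spec
  obtain ⟨g, hgI, hge', hge⟩ := NonUnitalSubring.exists_common_left_unit hI he'I heI
  calc f hex.choose * y = f g * hex.choose * y := by rw [← hf g hgI _ he'I, hge']
    _ = f g * e * y := by rw [mul_assoc, he'y, mul_assoc, hey]
    _ = f e * y := by rw [← hf g hgI e heI, hge]

theorem extendAlongLeftUnits_add (hI : ∀ x ∈ I, ∃ e ∈ I, e * x = x)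
    (hf : ∀ x ∈ I, ∀ y ∈ I, f (x * y) = f x * y) {y z : R}
    (hy : y ∈ leftFixedBy (I : Set R)) (hz : z ∈ leftFixedBy (I : Set R)) :
    extendAlongLeftUnits (I : Set R) f (y + z) =
      extendAlongLeftUnits (I : Set R) f y + extendAlongLeftUnits (I : Set R) f z := by
  obtain ⟨g, hgI, hgy, hgz⟩ := exists_common_left_unit_of_mem_leftFixedBy hI hy hz
  rw [extendAlongLeftUnits_eq hI hf hgI (by rw [mul_add, hgy, hgz]),
    extendAlongLeftUnits_eq hI hf hgI hgy, extendAlongLeftUnits_eq hI hf hgI hgz, mul_add]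

theorem extendAlongLeftUnits_mul (hI : ∀ x ∈ I, ∃ e ∈ I, e * x = x)
    (hf : ∀ x ∈ I, ∀ y ∈ I, f (x * y) = f x * y) {y : R} (hy : y ∈ leftFixedBy (I : Set R))
    (r : R) :
    extendAlongLeftUnits (I : Set R) f (y * r) = extendAlongLeftUnits (I : Set R) f y * r := by
  obtain ⟨e, heI, hey⟩ := hy
  rw [extendAlongLeftUnits_eq hI hf heI (by rw [← mul_assoc, hey]),
    extendAlongLeftUnits_eq hI hf heI hey, mul_assoc]

theorem extendAlongLeftUnits_of_mem (hI : ∀ x ∈ I, ∃ e ∈ I, e * x = x)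
    (hf : ∀ x ∈ I, ∀ y ∈ I, f (x * y) = f x * y) {x : R} (hx : x ∈ I) :
    extendAlongLeftUnits (I : Set R) f x = f x := by
  obtain ⟨e, heI, hex⟩ := hI x hx
  rw [extendAlongLeftUnits_eq hI hf heI hex, ← hf e heI x hx, hex]

end LeftUnits

section Graded

variable [AddCommGroup ι] [Ring R] {𝒜 : ι → AddSubgroup R}

theorem IsRightIdealOfZero.exists_left_unit (hreg : ZeroRegular 𝒜) {I : Set R}
    (hI : IsRightIdealOfZero 𝒜 I) {x : R} (hx : x ∈ I) : ∃ e ∈ I, e * x = x := by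
  obtain ⟨b, hb, hxbx⟩ := hreg x (hI.1 hx)
  exact ⟨x * b, hI.2.2.2 x hx b hb, hxbx⟩

variable [DecidableEq ι] [GradedRing 𝒜]

open DirectSum

theorem GradedVNRegular.zeroRegular (hreg : GradedVNRegular 𝒜) : ZeroRegular 𝒜 := by
  intro a ha
  obtain ⟨b, hb⟩ := hreg a ⟨0, ha⟩
  refine ⟨decompose 𝒜 b 0, SetLike.coe_mem _, ?_⟩
  calc a * decompose 𝒜 b 0 * a = decompose 𝒜 (a * b * a) 0 := by
        rw [coe_decompose_mul_of_right_mem_zero 𝒜 ha, coe_decompose_mul_of_left_mem_zero 𝒜 ha]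
    _ = a := by rw [hb, decompose_of_mem_same 𝒜 ha]

def IsRightIdealOfZero.toNonUnitalSubring {I : Set R} (hI : IsRightIdealOfZero 𝒜 I) :
    NonUnitalSubring R where
  carrier := I
  zero_mem' := hI.2.1
  add_mem' {x y} hx hy := hI.2.2.1 x hx y hy
  neg_mem' {x} hx := by
    simpa using hI.2.2.2 x hx (-1) (neg_mem (SetLike.one_mem_graded 𝒜))
  mul_mem' {x y} hx hy := hI.2.2.2 x hx y (hI.1 hy)

variable {I : NonUnitalSubring R}

theorem isGradedRightIdeal_leftFixedBy (hI₀ : (I : Set R) ⊆ 𝒜 0)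
    (hI : ∀ x ∈ I, ∃ e ∈ I, e * x = x) : IsGradedRightIdeal 𝒜 (leftFixedBy (I : Set R)) := by
  refine ⟨⟨⟨0, I.zero_mem, zero_mul 0⟩, fun y hy z hz => leftFixedBy_add_mem hI hy hz,
    fun y ⟨e, heI, hey⟩ r => ⟨e, heI, by rw [← mul_assoc, hey]⟩⟩, fun y ⟨e, heI, hey⟩ γ => ?_⟩
  refine ⟨e, heI, ?_⟩
  rw [← coe_decompose_mul_of_left_mem_zero 𝒜 (hI₀ heI), hey]

theorem extendAlongLeftUnits_mem_graded {f : R → R} (hf₀ : ∀ x ∈ I, f x ∈ 𝒜 0) {y : R}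
    (hy : y ∈ leftFixedBy (I : Set R)) {δ : ι} (hyδ : y ∈ 𝒜 δ) :
    extendAlongLeftUnits (I : Set R) f y ∈ 𝒜 δ := by
  have hy' : ∃ e ∈ (I : Set R), e * y = y := hy
  rw [extendAlongLeftUnits, dif_pos hy', ← zero_add δ]
  exact SetLike.mul_mem_graded (hf₀ _ hy'.choose_spec.1) hyδ

end Graded

/-- If `R` is a `Γ`-graded von Neumann regular graded right
self-injective ring, then its degree-zero component `R₀` is a von Neumann regular
right self-injective ring. -/
theorem zero_component_regular_selfInjective
    [DecidableEq ι] [AddCommGroup ι] [Ring R] (𝒜 : ι → AddSubgroup R) [GradedRing 𝒜]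
    (hreg : GradedVNRegular 𝒜) (hinj : GradedSelfInjective 𝒜) :
    ZeroRegular 𝒜 ∧ ZeroSelfInjective 𝒜 := by
  refine ⟨hreg.zeroRegular, fun I hI f hf₀ _ hflin => ?_⟩
  let I' := hI.toNonUnitalSubring
  have hunits : ∀ x ∈ I', ∃ e ∈ I', e * x = x := fun _ hx =>
    hI.exists_left_unit hreg.zeroRegular hx
  have hf : ∀ x ∈ I', ∀ y ∈ I', f (x * y) = f x * y := fun x hx y hy => hflin x hx y (hI.1 hy)
  obtain ⟨c, hc₀, hc⟩ := hinj _ (isGradedRightIdeal_leftFixedBy hI.1 hunits) 0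
    (extendAlongLeftUnits I' f) (fun _ hy _ hz => extendAlongLeftUnits_add hunits hf hy hz)
    (fun _ hy r => extendAlongLeftUnits_mul hunits hf hy r)
    (fun _ _ hy hyδ => by rw [zero_add]; exact extendAlongLeftUnits_mem_graded hf₀ hy hyδ)
  refine ⟨c, hc₀, fun x hx => ?_⟩
  rw [← extendAlongLeftUnits_of_mem hunits hf hx, hc x (hunits x hx)]
end

section
/- If R is a strongly Γ-graded ring (i.e. R_γ·R_δ = R_{γ+δ} for all γ, δ ∈ Γ) whose degree-zero component R_0 is a von Neumann regular right self-injective ring, then R is graded von Neumann regular and graded right self-injective. -/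
/- Setting: `Γ = ι` an additive abelian group, `R` a `ι`-graded ring with identity,
with homogeneous components the additive subgroups `𝒜 γ`. -/

variable {ι R : Type*}

section Helpers
variable [DecidableEq ι] [AddCommGroup ι] [Ring R] (𝒜 : ι → AddSubgroup R) [GradedRing 𝒜]

lemma memA0_mul {a b : R} (ha : a ∈ 𝒜 (0:ι)) (hb : b ∈ 𝒜 (0:ι)) : a * b ∈ 𝒜 (0:ι) := by
  have := SetLike.mul_mem_graded ha hb
  rwa [add_zero] at this

lemma neg_snd_sum [Ring R] (l : List (R × R)) :
    (l.map fun p => p.1 * -p.2).sum = -(l.map fun p => p.1 * p.2).sum := by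
  induction l with
  | nil => simp
  | cons q l ih =>
      rw [List.map_cons, List.map_cons, List.sum_cons, List.sum_cons, ih, mul_neg, neg_add]

/-- Extraction of a finite representation of `1` from strong grading. -/
lemma one_rep
    (hstrong : ∀ γ δ : ι, (𝒜 (γ + δ) : Set R) ⊆
      (AddSubgroup.closure {x : R | ∃ a ∈ 𝒜 γ, ∃ b ∈ 𝒜 δ, x = a * b} : Set R))
    (γ : ι) :
    ∃ l : List (R × R), (∀ p ∈ l, p.1 ∈ 𝒜 (-γ) ∧ p.2 ∈ 𝒜 γ) ∧
      (l.map fun p => p.1 * p.2).sum = 1 := by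
  have h1 : (1 : R) ∈ 𝒜 ((-γ) + γ) := by
    rw [neg_add_cancel]; exact SetLike.one_mem_graded 𝒜
  have hmem : (1:R) ∈ AddSubgroup.closure {x : R | ∃ a ∈ 𝒜 (-γ), ∃ b ∈ 𝒜 γ, x = a * b} :=
    hstrong (-γ) γ h1
  refine AddSubgroup.closure_induction
    (p := fun s _ => ∃ l : List (R × R), (∀ p ∈ l, p.1 ∈ 𝒜 (-γ) ∧ p.2 ∈ 𝒜 γ) ∧
      (l.map fun p => p.1 * p.2).sum = s) ?_ ?_ ?_ ?_ hmem
  · rintro x ⟨a, ha, b, hb, rfl⟩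
    exact ⟨[(a, b)], by simp [ha, hb], by simp⟩
  · exact ⟨[], by simp, by simp⟩
  · rintro x y _ _ ⟨l1, h1l, rfl⟩ ⟨l2, h2l, rfl⟩
    exact ⟨l1 ++ l2, fun p hp => ((List.mem_append.1 hp).elim (h1l p) (h2l p)), by simp⟩
  · rintro x _ ⟨l, hl, rfl⟩
    refine ⟨l.map fun p => (p.1, -p.2), ?_, ?_⟩
    · rintro p hp
      simp only [List.mem_map] at hp
      obtain ⟨q, hq, rfl⟩ := hp
      exact ⟨(hl q hq).1, neg_mem (hl q hq).2⟩
    · rw [List.map_map]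
      have : ((fun p : R × R => p.1 * p.2) ∘ fun p : R × R => (p.1, -p.2)) =
          fun p : R × R => p.1 * -p.2 := rfl
      rw [this]
      exact neg_snd_sum l

/-- A left unit on a list is a left unit on the right-ideal closure it generates. -/
lemma leftUnit_on_closure (l : List R) (e : R) (he : ∀ a ∈ l, e * a = a) :
    ∀ s ∈ AddSubgroup.closure {x : R | ∃ a ∈ l, ∃ r ∈ 𝒜 (0:ι), x = a * r}, e * s = s := by
  intro s hs
  refine AddSubgroup.closure_induction (p := fun s _ => e * s = s) ?_ (by simp) ?_ ?_ hs
  · rintro x ⟨a, ha, r, _, rfl⟩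
    rw [← mul_assoc, he a ha]
  · intro x y _ _ hx hy; rw [mul_add, hx, hy]
  · intro x _ hx; rw [mul_neg, hx]

/-- The closure is closed under right multiplication by degree-zero elements. -/
lemma closure_mul_right (l : List R) {s w : R} (hw : w ∈ 𝒜 (0:ι))
    (hs : s ∈ AddSubgroup.closure {x : R | ∃ a ∈ l, ∃ r ∈ 𝒜 (0:ι), x = a * r}) :
    s * w ∈ AddSubgroup.closure {x : R | ∃ a ∈ l, ∃ r ∈ 𝒜 (0:ι), x = a * r} := by
  refine AddSubgroup.closure_induction
    (p := fun s _ => s * w ∈ AddSubgroup.closure {x : R | ∃ a ∈ l, ∃ r ∈ 𝒜 (0:ι), x = a * r})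
    ?_ (by show (0:R) * w ∈ _; rw [zero_mul]; exact zero_mem _) ?_ ?_ hs
  · rintro x ⟨a, ha, r, hr, rfl⟩
    exact AddSubgroup.subset_closure ⟨a, ha, r * w, memA0_mul 𝒜 hr hw, by rw [mul_assoc]⟩
  · intro x y _ _ hx hy; rw [add_mul]; exact add_mem hx hy
  · intro x _ hx; rw [neg_mul]; exact neg_mem hx

lemma closure_le_A0 (l : List R) (hl : ∀ a ∈ l, a ∈ 𝒜 (0:ι)) :
    AddSubgroup.closure {x : R | ∃ a ∈ l, ∃ r ∈ 𝒜 (0:ι), x = a * r} ≤ 𝒜 (0:ι) := by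
  rw [AddSubgroup.closure_le]
  rintro x ⟨a, ha, r, hr, rfl⟩
  exact memA0_mul 𝒜 (hl a ha) hr

/-- Key lemma: finitely many degree-zero elements admit a common left unit
in the right ideal they generate. -/
lemma exists_idem_of_zeroRegular (hreg0 : ZeroRegular 𝒜) :
    ∀ l : List R, (∀ a ∈ l, a ∈ 𝒜 (0:ι)) →
      ∃ e ∈ AddSubgroup.closure {x : R | ∃ a ∈ l, ∃ r ∈ 𝒜 (0:ι), x = a * r},
        ∀ a ∈ l, e * a = a := by
  intro l
  induction l with
  | nil => intro _; exact ⟨0, zero_mem _, by simp⟩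
  | cons a l ih =>
      intro hmem
      obtain ⟨e, heS, he⟩ := ih (fun b hb => hmem b (List.mem_cons_of_mem a hb))
      have hsub : AddSubgroup.closure {x : R | ∃ b ∈ l, ∃ r ∈ 𝒜 (0:ι), x = b * r} ≤
          AddSubgroup.closure {x : R | ∃ b ∈ a :: l, ∃ r ∈ 𝒜 (0:ι), x = b * r} := by
        apply AddSubgroup.closure_mono
        rintro x ⟨b, hb, r, hr, rfl⟩
        exact ⟨b, List.mem_cons_of_mem a hb, r, hr, rfl⟩
      have heA0 : e ∈ 𝒜 (0:ι) :=
        closure_le_A0 𝒜 l (fun b hb => hmem b (List.mem_cons_of_mem a hb)) heS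
      have haA0 : a ∈ 𝒜 (0:ι) := hmem a (List.mem_cons_self)
      have hee : e * e = e := leftUnit_on_closure 𝒜 l e he e heS
      obtain ⟨b, hbdef⟩ : ∃ b : R, b = a - e * a := ⟨_, rfl⟩
      have hbA0 : b ∈ 𝒜 (0:ι) := by
        rw [hbdef]; exact sub_mem haA0 (memA0_mul 𝒜 heA0 haA0)
      obtain ⟨x, hxA0, hbxb⟩ := hreg0 b hbA0
      have heb : e * b = 0 := by
        rw [hbdef, mul_sub, ← mul_assoc, hee, sub_self]
      obtain ⟨f, hfdef⟩ : ∃ f : R, f = b * x := ⟨_, rfl⟩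
      obtain ⟨g, hgdef⟩ : ∃ g : R, g = f - f * e := ⟨_, rfl⟩
      have hfb : f * b = b := by rw [hfdef]; exact hbxb
      have hgb : g * b = b := by
        rw [hgdef, sub_mul, mul_assoc, heb, mul_zero, sub_zero, hfb]
      have hge : g * e = 0 := by
        rw [hgdef, sub_mul, mul_assoc, hee, sub_self]
      obtain ⟨e', he'def⟩ : ∃ e' : R, e' = e + g := ⟨_, rfl⟩
      have hax : a * x ∈ AddSubgroup.closure {y : R | ∃ c ∈ a :: l, ∃ r ∈ 𝒜 (0:ι), y = c * r} :=
        AddSubgroup.subset_closure ⟨a, List.mem_cons_self, x, hxA0, rfl⟩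
      have heax : e * (a * x) ∈
          AddSubgroup.closure {y : R | ∃ c ∈ a :: l, ∃ r ∈ 𝒜 (0:ι), y = c * r} := by
        exact hsub (closure_mul_right 𝒜 l (memA0_mul 𝒜 haA0 hxA0) heS)
      have hfS : f ∈ AddSubgroup.closure {y : R | ∃ c ∈ a :: l, ∃ r ∈ 𝒜 (0:ι), y = c * r} := by
        have hfx : f = a * x - e * (a * x) := by rw [hfdef, hbdef, sub_mul, mul_assoc]
        rw [hfx]; exact sub_mem hax heax
      have hgS : g ∈ AddSubgroup.closure {y : R | ∃ c ∈ a :: l, ∃ r ∈ 𝒜 (0:ι), y = c * r} := by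
        have hfe : f * e ∈ AddSubgroup.closure {y : R | ∃ c ∈ a :: l, ∃ r ∈ 𝒜 (0:ι), y = c * r} :=
          closure_mul_right 𝒜 (a :: l) heA0 hfS
        rw [hgdef]; exact sub_mem hfS hfe
      refine ⟨e', by rw [he'def]; exact add_mem (hsub heS) hgS, ?_⟩
      intro c hc
      rcases List.mem_cons.1 hc with rfl | hcl
      · have hga : g * c = b := by
          have hc' : c = b + e * c := by rw [hbdef]; abel
          calc g * c = g * b + g * (e * c) := by rw [← mul_add, ← hc']
            _ = b + (g * e) * c := by rw [hgb, mul_assoc]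
            _ = b := by rw [hge, zero_mul, add_zero]
        rw [he'def, add_mul, hga, hbdef]; abel
      · have hgc : g * c = 0 := by
          rw [show c = e * c from (he c hcl).symm, ← mul_assoc, hge, zero_mul]
        rw [he'def, add_mul, hgc, add_zero, he c hcl]

/-- If `e` is a left unit on every member of a list, it is a left unit on the sum. -/
lemma leftUnit_list_sum (e : R) (m : List R) (h : ∀ y ∈ m, e * y = y) :
    e * m.sum = m.sum := by
  induction m with
  | nil => simp
  | cons y m ih =>
      simp only [List.sum_cons, mul_add]
      rw [h y (List.mem_cons_self), ih (fun z hz => h z (List.mem_cons_of_mem y hz))]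

lemma list_sum_mem_of_forall (I : Set R) (h0 : (0:R) ∈ I)
    (hadd : ∀ x ∈ I, ∀ y ∈ I, x + y ∈ I) (m : List R) (h : ∀ y ∈ m, y ∈ I) :
    m.sum ∈ I := by
  induction m with
  | nil => simpa
  | cons y m ih =>
      simp only [List.sum_cons]
      exact hadd y (h y (List.mem_cons_self)) m.sum
        (ih (fun z hz => h z (List.mem_cons_of_mem y hz)))

lemma rep_mul (a : R) (l : List (R × R)) (h : (l.map fun p => p.1 * p.2).sum = 1) :
    (l.map fun p => a * p.1 * p.2).sum = a := by
  have h1 : (l.map fun p => a * p.1 * p.2) = l.map fun p => a * (p.1 * p.2) := by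
    simp [mul_assoc]
  rw [h1, List.sum_map_mul_left, h, mul_one]

end Helpers

/-- If `R` is strongly graded (`R_γ · R_δ = R_{γ+δ}`) and `R₀` is a
von Neumann regular right self-injective ring, then `R` is graded von Neumann regular
and graded right self-injective. -/
theorem stronglyGraded_regular_selfInjective_of_zero_component
    [DecidableEq ι] [AddCommGroup ι] [Ring R] (𝒜 : ι → AddSubgroup R) [GradedRing 𝒜]
    (hstrong : ∀ γ δ : ι, (𝒜 (γ + δ) : Set R) ⊆
      (AddSubgroup.closure {x : R | ∃ a ∈ 𝒜 γ, ∃ b ∈ 𝒜 δ, x = a * b} : Set R))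
    (hreg0 : ZeroRegular 𝒜) (hinj0 : ZeroSelfInjective 𝒜) :
    GradedVNRegular 𝒜 ∧ GradedSelfInjective 𝒜 := by
  constructor
  · -- graded regularity
    rintro a ⟨γ, ha⟩
    obtain ⟨l, hl, hlsum⟩ := one_rep 𝒜 hstrong γ
    set L := l.map (fun p => a * p.1) with hLdef
    have hLmem : ∀ m ∈ L, m ∈ 𝒜 (0:ι) := by
      rintro m hm
      simp only [hLdef, List.mem_map] at hm
      obtain ⟨p, hp, rfl⟩ := hm
      have := SetLike.mul_mem_graded ha (hl p hp).1
      rwa [add_neg_cancel] at this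
    obtain ⟨e, heS, he⟩ := exists_idem_of_zeroRegular 𝒜 hreg0 L hLmem
    have heab : ∃ b : R, a * b = e := by
      have hle : AddSubgroup.closure {x : R | ∃ m ∈ L, ∃ r ∈ 𝒜 (0:ι), x = m * r} ≤
          (AddMonoidHom.mulLeft a).range := by
        rw [AddSubgroup.closure_le]
        rintro x ⟨m, hm, r, _, rfl⟩
        simp only [hLdef, List.mem_map] at hm
        obtain ⟨p, _, rfl⟩ := hm
        exact ⟨p.1 * r, by simp [AddMonoidHom.mulLeft, mul_assoc]⟩
      obtain ⟨b, hb⟩ := hle heS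
      exact ⟨b, hb⟩
    obtain ⟨b, hb⟩ := heab
    refine ⟨b, ?_⟩
    rw [hb]
    have hsum : (l.map fun p => a * p.1 * p.2).sum = a := rep_mul a l hlsum
    calc e * a = e * (l.map fun p => a * p.1 * p.2).sum := by rw [hsum]
      _ = (l.map fun p => a * p.1 * p.2).sum := by
          apply leftUnit_list_sum
          rintro y hy
          simp only [List.mem_map] at hy
          obtain ⟨p, hp, rfl⟩ := hy
          rw [← mul_assoc]
          congr 1
          exact he (a * p.1) (by rw [hLdef]; exact List.mem_map_of_mem hp)
      _ = a := hsum
  · -- graded self-injectivity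
    rintro I hI γ f hadd hlin hdeg
    obtain ⟨⟨h0I, haddI, hmulI⟩, hcomp⟩ := hI
    have hf0 : f 0 = 0 := by
      have h := hadd 0 h0I 0 h0I
      rw [add_zero] at h
      exact (left_eq_add.1 h)
    set I₀ : Set R := I ∩ (𝒜 (0:ι) : Set R) with hI₀def
    have hI₀ideal : IsRightIdealOfZero 𝒜 I₀ :=
      ⟨fun x hx => hx.2, ⟨h0I, zero_mem _⟩,
        fun x hx y hy => ⟨haddI x hx.1 y hy.1, add_mem hx.2 hy.2⟩,
        fun x hx r hr => ⟨hmulI x hx.1 r, memA0_mul 𝒜 hx.2 hr⟩⟩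
    obtain ⟨l, hl, hlsum⟩ := one_rep 𝒜 hstrong (-γ)
    -- hl : ∀ p ∈ l, p.1 ∈ 𝒜 (-(-γ)) ∧ p.2 ∈ 𝒜 (-γ)
    have key : ∀ m : List (R × R), (∀ p ∈ m, p.1 ∈ 𝒜 γ ∧ p.2 ∈ 𝒜 (-γ)) →
        ∃ c ∈ 𝒜 γ, ∀ x ∈ I₀, (m.map fun p => p.1 * p.2).sum * f x = c * x := by
      intro m
      induction m with
      | nil => intro _; exact ⟨0, zero_mem _, by simp⟩
      | cons p m ih =>
          intro hm
          obtain ⟨c', hc'A, hc'⟩ := ih (fun q hq => hm q (List.mem_cons_of_mem p hq))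
          have hp1 := (hm p (List.mem_cons_self)).1
          have hp2 := (hm p (List.mem_cons_self)).2
          obtain ⟨cp, hcpA, hcp0⟩ := hinj0 I₀ hI₀ideal (fun x => p.2 * f x)
            (fun x hx => by
              have hfx : f x ∈ 𝒜 (γ + 0) := hdeg 0 x hx.1 hx.2
              have h2 := SetLike.mul_mem_graded hp2 hfx
              rwa [show -γ + (γ + 0) = 0 by abel] at h2)
            (fun x hx y hy => by
              show p.2 * f (x + y) = p.2 * f x + p.2 * f y
              rw [hadd x hx.1 y hy.1, mul_add])
            (fun x hx r _ => by
              show p.2 * f (x * r) = p.2 * f x * r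
              rw [hlin x hx.1 r, mul_assoc])
          have hcp : ∀ x ∈ I₀, p.2 * f x = cp * x := hcp0
          refine ⟨p.1 * cp + c', add_mem ?_ hc'A, ?_⟩
          · have h3 := SetLike.mul_mem_graded hp1 hcpA
            rwa [add_zero] at h3
          · intro x hx
            simp only [List.map_cons, List.sum_cons, add_mul]
            rw [mul_assoc, hcp x hx, hc' x hx, ← mul_assoc]
    obtain ⟨c, hcA, hc⟩ := key l
      (fun p hp => ⟨by have := (hl p hp).1; rwa [neg_neg] at this, (hl p hp).2⟩)
    have hc0 : ∀ x ∈ I₀, f x = c * x := by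
      intro x hx
      have := hc x hx
      rwa [hlsum, one_mul] at this
    have hflist : ∀ m : List R, (∀ y ∈ m, y ∈ I) → f m.sum = (m.map f).sum := by
      intro m
      induction m with
      | nil => intro _; simpa using hf0
      | cons y m ih =>
          intro hmem
          have hsumI : m.sum ∈ I := list_sum_mem_of_forall I h0I haddI m
            (fun z hz => hmem z (List.mem_cons_of_mem y hz))
          simp only [List.sum_cons, List.map_cons]
          rw [hadd y (hmem y (List.mem_cons_self)) m.sum hsumI,
            ih (fun z hz => hmem z (List.mem_cons_of_mem y hz))]
    -- homogeneous case
    have hhomog : ∀ δ : ι, ∀ x ∈ I, x ∈ 𝒜 δ → f x = c * x := by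
      intro δ x hxI hxδ
      obtain ⟨m, hmp, hmsum⟩ := one_rep 𝒜 hstrong δ
      have hxrep : (m.map fun q => x * q.1 * q.2).sum = x := rep_mul x m hmsum
      have htermI : ∀ q ∈ m, x * q.1 * q.2 ∈ I := fun q _ => hmulI _ (hmulI x hxI q.1) q.2
      have hxq0 : ∀ q ∈ m, x * q.1 ∈ I₀ := by
        intro q hq
        refine ⟨hmulI x hxI q.1, ?_⟩
        have := SetLike.mul_mem_graded hxδ (hmp q hq).1
        rwa [add_neg_cancel] at this
      calc f x = f (m.map fun q => x * q.1 * q.2).sum := by rw [hxrep]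
        _ = ((m.map fun q => x * q.1 * q.2).map f).sum := by
            apply hflist
            intro y hy
            simp only [List.mem_map] at hy
            obtain ⟨q, hq, rfl⟩ := hy
            exact htermI q hq
        _ = (m.map fun q => c * (x * q.1 * q.2)).sum := by
            rw [List.map_map]
            congr 1
            refine List.map_congr_left ?_
            intro q hq
            simp only [Function.comp]
            rw [hlin (x * q.1) (hmulI x hxI q.1) q.2, hc0 (x * q.1) (hxq0 q hq), mul_assoc]
        _ = c * x := by rw [List.sum_map_mul_left, hxrep]
    refine ⟨c, hcA, ?_⟩
    intro x hxI
    classical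
    have hdecomp := DirectSum.sum_support_decompose 𝒜 x
    have hmemsum : ∀ s : Finset ι,
        (∑ i ∈ s, ((DirectSum.decompose 𝒜 x i : 𝒜 i) : R)) ∈ I := by
      intro s
      induction s using Finset.induction_on with
      | empty => simpa using h0I
      | insert k t hni2 ih2 =>
          rw [Finset.sum_insert hni2]
          exact haddI _ (hcomp x hxI k) _ ih2
    have hfsum : ∀ s : Finset ι,
        f (∑ i ∈ s, ((DirectSum.decompose 𝒜 x i : 𝒜 i) : R)) =
          ∑ i ∈ s, f ((DirectSum.decompose 𝒜 x i : 𝒜 i) : R) := by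
      intro s
      induction s using Finset.induction_on with
      | empty => simpa using hf0
      | insert j s hni ih =>
          rw [Finset.sum_insert hni, Finset.sum_insert hni,
            hadd _ (hcomp x hxI j) _ (hmemsum s), ih]
    calc f x = f (∑ i ∈ (DirectSum.decompose 𝒜 x).support,
          ((DirectSum.decompose 𝒜 x i : 𝒜 i) : R)) := by rw [hdecomp]
      _ = ∑ i ∈ (DirectSum.decompose 𝒜 x).support,
          f ((DirectSum.decompose 𝒜 x i : 𝒜 i) : R) := hfsum _
      _ = ∑ i ∈ (DirectSum.decompose 𝒜 x).support,
          c * ((DirectSum.decompose 𝒜 x i : 𝒜 i) : R) := by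
            refine Finset.sum_congr rfl ?_
            intro i _
            exact hhomog i _ (hcomp x hxI i) (SetLike.coe_mem _)
      _ = c * x := by rw [← Finset.mul_sum, hdecomp]
end

section
/- Let R be a Γ-graded von Neumann regular ring and let B be a graded right ideal of R generated by finitely many homogeneous elements. Then there exists a homogeneous idempotent e ∈ R_0 with B = eR; in particular, B is a direct summand of R as a right R-module. -/
/- Setting: `Γ = ι` an additive abelian group, `R` a `ι`-graded ring with identity,
with homogeneous components the additive subgroups `𝒜 γ`. -/

variable {ι R : Type*}

/-! A homogeneous `a ∈ R_γ` with `a b a = a` also satisfies `a b' a = a` for the degree `-γ`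
component `b'` of `b`, so `aR = fR` for the idempotent `f = a b'` of degree `0`. Generators are then
absorbed one at a time: given an idempotent `e ∈ R₀` and a homogeneous `a`, the element
`c = a - e a` generates `e'R` for an idempotent `e' ∈ R₀` with `e e' = 0`, and
`g = e + e' - e' e` is an idempotent of degree `0` with `gR = eR + aR`. -/

section RightIdeal

variable [Ring R] {I : Set R}

lemma IsRightIdealSet.add_mem (hI : IsRightIdealSet I) {x y : R} (hx : x ∈ I) (hy : y ∈ I) :
    x + y ∈ I :=
  hI.2.1 x hx y hy

lemma IsRightIdealSet.mul_mem (hI : IsRightIdealSet I) {x : R} (hx : x ∈ I) (r : R) :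
    x * r ∈ I :=
  hI.2.2 x hx r

lemma IsRightIdealSet.sub_mem (hI : IsRightIdealSet I) {x y : R} (hx : x ∈ I) (hy : y ∈ I) :
    x - y ∈ I := by
  simpa [sub_eq_add_neg] using hI.add_mem hx (hI.mul_mem hy (-1))

lemma isRightIdealSet_setOf_mul_left_eq_self (e : R) : IsRightIdealSet {x : R | e * x = x} :=
  ⟨mul_zero e, fun x hx y hy => by simp_all [mul_add],
    fun x hx r => by simp_all [← mul_assoc]⟩

end RightIdeal

section IdempotentJoin

variable [Ring R] {e e' : R}

/-- When `e * e' = 0`, this is an idempotent generating the right ideal `eR + e'R`. -/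
def idempotentJoin (e e' : R) : R := e + e' - e' * e

lemma idempotentJoin_mul_left (he : IsIdempotentElem e) : idempotentJoin e e' * e = e := by
  simp only [idempotentJoin, sub_mul, add_mul, mul_assoc, he.eq, add_sub_cancel_right]

lemma idempotentJoin_mul_right (he' : IsIdempotentElem e') (h : e * e' = 0) :
    idempotentJoin e e' * e' = e' := by
  simp only [idempotentJoin, sub_mul, add_mul, mul_assoc, h, he'.eq, mul_zero, zero_add, sub_zero]

lemma isIdempotentElem_idempotentJoin (he : IsIdempotentElem e) (he' : IsIdempotentElem e')
    (h : e * e' = 0) : IsIdempotentElem (idempotentJoin e e') := by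
  have hl := idempotentJoin_mul_left (e' := e') he
  have hr := idempotentJoin_mul_right he' h
  calc idempotentJoin e e' * idempotentJoin e e'
      = idempotentJoin e e' * e + idempotentJoin e e' * e'
          - idempotentJoin e e' * e' * e := by
        simp only [idempotentJoin, mul_sub, mul_add, mul_assoc]
    _ = idempotentJoin e e' := by rw [hl, hr, idempotentJoin]

lemma IsRightIdealSet.idempotentJoin_mem {I : Set R} (hI : IsRightIdealSet I) (he : e ∈ I)
    (he' : e' ∈ I) : idempotentJoin e e' ∈ I :=
  hI.sub_mem (hI.add_mem he he') (hI.mul_mem he' e)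

end IdempotentJoin

lemma mul_decompose_neg_mul_self [DecidableEq ι] [AddGroup ι] [Ring R] {𝒜 : ι → AddSubgroup R}
    [GradedRing 𝒜] {γ : ι} {a b : R} (ha : a ∈ 𝒜 γ) (hab : a * b * a = a) :
    a * (DirectSum.decompose 𝒜 b (-γ) : R) * a = a := by
  have h := congrArg (fun x => (DirectSum.decompose 𝒜 x (γ + -γ + γ) : R)) hab
  simp only [DirectSum.coe_decompose_mul_add_of_right_mem 𝒜 ha,
    DirectSum.coe_decompose_mul_add_of_left_mem 𝒜 ha] at h
  rwa [neg_add_cancel_right, DirectSum.decompose_of_mem_same 𝒜 ha] at h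

namespace GradedVNRegular

variable [DecidableEq ι] [AddCommGroup ι] [Ring R] {𝒜 : ι → AddSubgroup R} [GradedRing 𝒜]

lemma exists_idempotent_mul_eq_self (hreg : GradedVNRegular 𝒜) {γ : ι} {a : R}
    (ha : a ∈ 𝒜 γ) :
    ∃ f ∈ 𝒜 0, IsIdempotentElem f ∧ f * a = a ∧ ∃ r, f = a * r := by
  obtain ⟨b, hab⟩ := hreg a ⟨γ, ha⟩
  obtain ⟨b', hb', hab'⟩ : ∃ b' ∈ 𝒜 (-γ), a * b' * a = a :=
    ⟨_, SetLike.coe_mem _, mul_decompose_neg_mul_self ha hab⟩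
  refine ⟨a * b', ?_, ?_, hab', b', rfl⟩
  · simpa using SetLike.mul_mem_graded ha hb'
  · rw [IsIdempotentElem, ← mul_assoc, hab']

lemma exists_idempotent_absorb (hreg : GradedVNRegular 𝒜) {I : Set R} (hI : IsRightIdealSet I)
    {e : R} (he0 : e ∈ 𝒜 0) (he : IsIdempotentElem e) (heI : e ∈ I)
    {γ : ι} {a : R} (ha : a ∈ 𝒜 γ) (haI : a ∈ I) :
    ∃ g ∈ 𝒜 0, IsIdempotentElem g ∧ g * e = e ∧ g * a = a ∧ g ∈ I := by
  set c := a - e * a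
  have hc : c ∈ 𝒜 γ := sub_mem ha (by simpa using SetLike.mul_mem_graded he0 ha)
  have hec : e * c = 0 := by rw [mul_sub, ← mul_assoc, he.eq, sub_self]
  obtain ⟨e', he'0, he', he'c, r, hr⟩ := hreg.exists_idempotent_mul_eq_self hc
  have hee' : e * e' = 0 := by rw [hr, ← mul_assoc, hec, zero_mul]
  have hge := idempotentJoin_mul_left (e' := e') he
  have hgc : idempotentJoin e e' * c = c := by
    rw [← he'c, ← mul_assoc, idempotentJoin_mul_right he' hee']
  have he'I : e' ∈ I := hr ▸ hI.mul_mem (hI.sub_mem haI (hI.mul_mem heI a)) r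
  refine ⟨idempotentJoin e e', ?_, isIdempotentElem_idempotentJoin he he' hee', hge, ?_,
    hI.idempotentJoin_mem heI he'I⟩
  · exact sub_mem (add_mem he0 he'0) (by simpa using SetLike.mul_mem_graded he'0 he0)
  · calc idempotentJoin e e' * a
        = idempotentJoin e e' * c + idempotentJoin e e' * e * a := by
          rw [mul_assoc, ← mul_add, sub_add_cancel]
      _ = a := by rw [hgc, hge, sub_add_cancel]

lemma exists_idempotent_mul_eq_self_of_finset (hreg : GradedVNRegular 𝒜) {I : Set R}
    (hI : IsRightIdealSet I) (s : Finset R) (hs : ∀ a ∈ s, IsHomog 𝒜 a) (hsI : ↑s ⊆ I) :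
    ∃ e ∈ 𝒜 0, IsIdempotentElem e ∧ e ∈ I ∧ ∀ a ∈ s, e * a = a := by
  classical
  induction s using Finset.induction_on with
  | empty => exact ⟨0, zero_mem _, IsIdempotentElem.zero, hI.1, by simp⟩
  | insert a s _ ih =>
    obtain ⟨e, he0, he, heI, hes⟩ :=
      ih (fun x hx => hs x (Finset.mem_insert_of_mem hx))
        ((Finset.coe_subset.mpr (Finset.subset_insert a s)).trans hsI)
    obtain ⟨γ, ha⟩ := hs a (Finset.mem_insert_self a s)
    obtain ⟨g, hg0, hg, hge, hga, hgI⟩ :=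
      hreg.exists_idempotent_absorb hI he0 he heI ha (hsI (by simp))
    refine ⟨g, hg0, hg, hgI, ?_⟩
    simp only [Finset.mem_insert, forall_eq_or_imp]
    exact ⟨hga, fun x hx => by rw [← hes x hx, ← mul_assoc, hge]⟩

end GradedVNRegular

-- `eR` is encoded as `{x | e * x = x}`, which equals `eR` since `e` is idempotent.
/-- In a graded von Neumann regular ring, every graded right ideal `B`
generated by finitely many homogeneous elements is of the form `eR` for a homogeneous
idempotent `e ∈ R₀`; in particular `B` is a direct summand of `R`. (`eR` is encoded as
`{x | e * x = x}`, which equals `eR` since `e` is idempotent.) -/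
theorem finitely_generated_graded_right_ideal_is_summand
    [DecidableEq ι] [AddCommGroup ι] [Ring R] (𝒜 : ι → AddSubgroup R) [GradedRing 𝒜]
    (hreg : GradedVNRegular 𝒜) (B : Set R) (hB : IsGradedRightIdeal 𝒜 B)
    (hgen : ∃ s : Finset R, (∀ a ∈ s, IsHomog 𝒜 a) ∧ ↑s ⊆ B ∧
      ∀ I : Set R, IsRightIdealSet I → ↑s ⊆ I → B ⊆ I) :
    ∃ e : R, e ∈ 𝒜 (0 : ι) ∧ e * e = e ∧ B = {x : R | e * x = x} := by
  obtain ⟨s, hs, hsB, hBmin⟩ := hgen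
  obtain ⟨e, he0, he, heB, hes⟩ :=
    hreg.exists_idempotent_mul_eq_self_of_finset hB.1 s hs hsB
  refine ⟨e, he0, he, subset_antisymm ?_ ?_⟩
  · exact hBmin _ (isRightIdealSet_setOf_mul_left_eq_self e) hes
  · intro x (hx : e * x = x)
    exact hx ▸ hB.1.mul_mem heB x
end

section
/- Let R be a Γ-graded ring and A a graded quasi-injective graded right R-module. Let f : A → A be an R-linear map of degree α whose kernel is graded essential in A. Then for every R-linear map r : A → A of degree −α there exists an R-linear map g : A → A of degree 0 with g ∘ (id_A − r∘f) = id_A; in particular id_A − r∘f is injective. -/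
/- Setting: `Γ = ι` an additive abelian group, `R` a ring, and `A` a (graded) right
`R`-module, encoded as a left `Rᵐᵒᵖ`-module, with homogeneous components the additive
subgroups `ℬ γ` forming a direct sum decomposition of `A`. -/

variable {ι : Type*} {R : Type*}

section ModDefs
variable [DecidableEq ι] [AddCommGroup ι]
variable (R) [Ring R] {A : Type*} [AddCommGroup A] [Module Rᵐᵒᵖ A]
  (ℬ : ι → AddSubgroup A) [DirectSum.Decomposition ℬ]

/-- A graded submodule of the graded right `R`-module `A` (right module structure is
encoded as a `Rᵐᵒᵖ`-module structure): a submodule containing all homogeneous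
components of its elements. -/
def IsGradedSubmodule (M : Set A) : Prop :=
  (0 : A) ∈ M ∧ (∀ x ∈ M, ∀ y ∈ M, x + y ∈ M) ∧ (∀ x ∈ M, -x ∈ M) ∧
  (∀ x ∈ M, ∀ r : R, (MulOpposite.op r) • x ∈ M) ∧
  ∀ x ∈ M, ∀ γ : ι, ((DirectSum.decompose ℬ x γ : ℬ γ) : A) ∈ M

/-- A subset `M` is graded essential in `A`: it meets every nonzero graded
submodule of `A` nontrivially. -/
def GrEssentialSubmodule (M : Set A) : Prop :=
  ∀ N : Set A, IsGradedSubmodule R ℬ N → (∃ x ∈ N, x ≠ 0) →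
    ∃ x, x ∈ M ∩ N ∧ x ≠ 0

/-- An `R`-linear map `A → A` of degree `α`. -/
def IsDegMap (α : ι) (f : A → A) : Prop :=
  (∀ x y : A, f (x + y) = f x + f y) ∧
  (∀ (x : A) (r : R), f ((MulOpposite.op r) • x) = (MulOpposite.op r) • f x) ∧
  ∀ γ : ι, ∀ a ∈ ℬ γ, f a ∈ ℬ (γ + α)

/-- `A` is graded quasi-injective: every degree-zero `R`-linear map from a graded
submodule `M` of `A` to `A` extends to a degree-zero `R`-linear map `A → A`. -/
def GrQuasiInjective : Prop :=
  ∀ M : Set A, IsGradedSubmodule R ℬ M → ∀ f : A → A,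
    (∀ x ∈ M, ∀ y ∈ M, f (x + y) = f x + f y) →
    (∀ x ∈ M, ∀ r : R, f ((MulOpposite.op r) • x) = (MulOpposite.op r) • f x) →
    (∀ γ : ι, ∀ x ∈ M, x ∈ ℬ γ → f x ∈ ℬ γ) →
    ∃ g : A → A, IsDegMap R ℬ (0 : ι) g ∧ ∀ x ∈ M, g x = f x

end ModDefs


/-
Write `φ = id - r ∘ f`; it is `R`-linear of degree `0`. On `ker f` it is the identity, so its
kernel, a graded submodule, meets the graded essential submodule `ker f` only in `0` and hence
vanishes. An injective degree-`0` map reflects homogeneity, so the inverse of `φ` on its graded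
range `φ A` is a degree-`0` map there, and graded quasi-injectivity extends it to the required
left inverse of `φ`.
-/

section

variable [AddCommGroup ι] [Ring R] {A : Type*} [AddCommGroup A] [Module Rᵐᵒᵖ A]
  {ℬ : ι → AddSubgroup A}

theorem isDegMap_id : IsDegMap R ℬ (0 : ι) id :=
  ⟨fun _ _ => rfl, fun _ _ => rfl, fun γ a ha => by rwa [add_zero]⟩

namespace IsDegMap

variable {α β : ι} {f g : A → A}

def toAddMonoidHom (hf : IsDegMap R ℬ α f) : A →+ A := AddMonoidHom.mk' f hf.1

theorem map_smul (hf : IsDegMap R ℬ α f) (x : A) (c : R) :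
    f (MulOpposite.op c • x) = MulOpposite.op c • f x :=
  hf.2.1 x c

theorem map_mem (hf : IsDegMap R ℬ α f) {γ : ι} {a : A} (ha : a ∈ ℬ γ) : f a ∈ ℬ (γ + α) :=
  hf.2.2 γ a ha

theorem map_zero (hf : IsDegMap R ℬ α f) : f 0 = 0 :=
  hf.toAddMonoidHom.map_zero

theorem map_neg (hf : IsDegMap R ℬ α f) (x : A) : f (-x) = -f x :=
  hf.toAddMonoidHom.map_neg x

theorem comp (hg : IsDegMap R ℬ β g) (hf : IsDegMap R ℬ α f) :
    IsDegMap R ℬ (α + β) (g ∘ f) := by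
  refine ⟨fun x y => by simp only [Function.comp_apply, hf.1, hg.1], fun x c => ?_,
    fun γ a ha => ?_⟩
  · simp only [Function.comp_apply, hf.map_smul, hg.map_smul]
  · rw [← add_assoc]
    exact hg.map_mem (hf.map_mem ha)

theorem sub (hf : IsDegMap R ℬ α f) (hg : IsDegMap R ℬ α g) :
    IsDegMap R ℬ α (fun a => f a - g a) := by
  refine ⟨fun x y => by simp only [hf.1, hg.1]; abel, fun x c => ?_,
    fun γ a ha => sub_mem (hf.map_mem ha) (hg.map_mem ha)⟩
  simp only [hf.map_smul, hg.map_smul, smul_sub]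

theorem id_sub_comp {r : A → A} (hf : IsDegMap R ℬ α f) (hr : IsDegMap R ℬ (-α) r) :
    IsDegMap R ℬ (0 : ι) (fun a => a - r (f a)) :=
  isDegMap_id.sub (add_neg_cancel α ▸ hr.comp hf)

variable [DecidableEq ι] [DirectSum.Decomposition ℬ]

theorem decompose_map (hf : IsDegMap R ℬ α f) (a : A) (γ : ι) :
    (DirectSum.decompose ℬ (f a) (γ + α) : A) = f (DirectSum.decompose ℬ a γ) := by
  induction a using DirectSum.Decomposition.inductionOn ℬ with
  | zero => simp [hf.map_zero]
  | @homogeneous δ m =>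
    have hm : f m ∈ ℬ (δ + α) := hf.map_mem m.2
    by_cases hδ : δ = γ
    · subst hδ
      rw [DirectSum.decompose_of_mem_same ℬ hm, DirectSum.decompose_of_mem_same ℬ m.2]
    · rw [DirectSum.decompose_of_mem_ne ℬ hm (by simpa using hδ),
        DirectSum.decompose_of_mem_ne ℬ m.2 hδ, hf.map_zero]
  | add x y hx hy =>
    simp only [hf.1, DirectSum.decompose_add, DirectSum.add_apply, AddMemClass.coe_add, hx, hy]

theorem isGradedSubmodule_ker (hf : IsDegMap R ℬ α f) :
    IsGradedSubmodule R ℬ {a : A | f a = 0} := by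
  refine ⟨hf.map_zero, fun x hx y hy => ?_, fun x hx => ?_, fun x hx c => ?_, fun x hx γ => ?_⟩
  · simp_all [hf.1]
  · simp_all [hf.map_neg]
  · simp_all [hf.map_smul]
  · show f _ = 0
    rw [← hf.decompose_map, show f x = 0 from hx, DirectSum.decompose_zero]
    rfl

theorem isGradedSubmodule_range (hf : IsDegMap R ℬ α f) :
    IsGradedSubmodule R ℬ (Set.range f) := by
  refine ⟨⟨0, hf.map_zero⟩, ?_, ?_, ?_, ?_⟩
  · rintro _ ⟨x, rfl⟩ _ ⟨y, rfl⟩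
    exact ⟨x + y, hf.1 x y⟩
  · rintro _ ⟨x, rfl⟩
    exact ⟨-x, hf.map_neg x⟩
  · rintro _ ⟨x, rfl⟩ c
    exact ⟨MulOpposite.op c • x, hf.map_smul x c⟩
  · rintro _ ⟨x, rfl⟩ γ
    refine ⟨DirectSum.decompose ℬ x (γ - α), ?_⟩
    rw [← hf.decompose_map, sub_add_cancel]

theorem mem_of_map_mem (hf : IsDegMap R ℬ α f) (hinj : Function.Injective f) {γ : ι} {a : A}
    (ha : f a ∈ ℬ (γ + α)) : a ∈ ℬ γ := by
  have : (DirectSum.decompose ℬ a γ : A) = a :=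
    hinj (by rw [← hf.decompose_map, DirectSum.decompose_of_mem_same ℬ ha])
  exact this ▸ (DirectSum.decompose ℬ a γ).2

end IsDegMap

variable [DecidableEq ι] [DirectSum.Decomposition ℬ]

theorem GrQuasiInjective.exists_leftInverse (hqi : GrQuasiInjective R ℬ) {φ : A → A}
    (hφ : IsDegMap R ℬ (0 : ι) φ) (hinj : Function.Injective φ) :
    ∃ g : A → A, IsDegMap R ℬ (0 : ι) g ∧ Function.LeftInverse g φ := by
  have hψ : Function.LeftInverse (Function.invFun φ) φ := Function.leftInverse_invFun hinj
  obtain ⟨g, hg, hgψ⟩ := hqi _ hφ.isGradedSubmodule_range (Function.invFun φ)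
    (by rintro _ ⟨x, rfl⟩ _ ⟨y, rfl⟩; rw [← hφ.1, hψ, hψ, hψ])
    (by rintro _ ⟨x, rfl⟩ c; rw [← hφ.map_smul, hψ, hψ])
    (by rintro γ _ ⟨x, rfl⟩ hx; rw [hψ]; exact hφ.mem_of_map_mem hinj (by rwa [add_zero]))
  exact ⟨g, hg, fun x => (hgψ (φ x) ⟨x, rfl⟩).trans (hψ x)⟩

theorem IsDegMap.injective_id_sub_comp {α : ι} {f r : A → A} (hf : IsDegMap R ℬ α f)
    (hker : GrEssentialSubmodule R ℬ {a : A | f a = 0}) (hr : IsDegMap R ℬ (-α) r) :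
    Function.Injective (fun a => a - r (f a)) := by
  have hφ := hf.id_sub_comp hr
  refine (injective_iff_map_eq_zero hφ.toAddMonoidHom).2 fun x hx => ?_
  by_contra hx0
  obtain ⟨y, ⟨hfy, hφy⟩, hy0⟩ := hker _ hφ.isGradedSubmodule_ker ⟨x, hx, hx0⟩
  have hφy_eq : y - r (f y) = y := by rw [show f y = 0 from hfy, hr.map_zero, sub_zero]
  exact hy0 (hφy_eq ▸ hφy)

end

/-- Let `A` be a graded quasi-injective graded right `R`-module and
`f : A → A` an `R`-linear map of degree `α` whose kernel is graded essential in `A`.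
Then for every `R`-linear map `r : A → A` of degree `-α` there is an `R`-linear map
`g : A → A` of degree `0` with `g ∘ (id - r ∘ f) = id`; in particular `id - r ∘ f`
is injective. -/
theorem quasiInjective_one_sub_comp_leftInverse
    [DecidableEq ι] [AddCommGroup ι] [Ring R]
    {A : Type*} [AddCommGroup A] [Module Rᵐᵒᵖ A]
    (ℬ : ι → AddSubgroup A) [DirectSum.Decomposition ℬ]
    (hqi : GrQuasiInjective R ℬ) (α : ι) (f : A → A) (hf : IsDegMap R ℬ α f)
    (hker : GrEssentialSubmodule R ℬ {a : A | f a = 0})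
    (r : A → A) (hr : IsDegMap R ℬ (-α) r) :
    (∃ g : A → A, IsDegMap R ℬ (0 : ι) g ∧ ∀ a : A, g (a - r (f a)) = a) ∧
      Function.Injective (fun a : A => a - r (f a)) := by
  have hinj := hf.injective_id_sub_comp hker hr
  exact ⟨hqi.exists_leftInverse (hf.id_sub_comp hr) hinj, hinj⟩
end

section
/- Let R be a Γ-graded ring which is graded prime (for homogeneous x, y ∈ R, xRy = 0 implies x = 0 or y = 0), graded von Neumann regular, and graded abelian (every homogeneous idempotent of R is central). Then R is a graded division ring: every nonzero homogeneous element of R is invertible in R. -/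
/- Setting: `Γ = ι` an additive abelian group, `R` a `ι`-graded ring with identity,
with homogeneous components the additive subgroups `𝒜 γ`. -/

variable {ι R : Type*}

/-! A nonzero homogeneous `x ∈ 𝒜 γ` has an inner inverse `b`, which may be taken in `𝒜 (-γ)`.
Then `x * b` and `b * x` are idempotents of degree `0`, hence central, and centrality gives
`(1 - x * b) * R * x = 0` and `x * R * (1 - b * x) = 0`; graded primeness forces
`x * b = 1 = b * x`. -/

namespace DirectSum

variable {σ A : Type*} [DecidableEq ι] [AddGroup ι] [Semiring A] [SetLike σ A]
  [AddSubmonoidClass σ A] (𝒜 : ι → σ) [GradedRing 𝒜]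

theorem coe_decompose_mul_mul_of_mem {γ : ι} {x : A} (hx : x ∈ 𝒜 γ) (b : A) :
    (decompose 𝒜 (x * b * x) γ : A) = x * decompose 𝒜 b (-γ) * x := by
  conv_lhs => rw [← zero_add γ, ← add_neg_cancel γ]
  rw [coe_decompose_mul_add_of_right_mem 𝒜 hx, coe_decompose_mul_add_of_left_mem 𝒜 hx]

theorem exists_mem_neg_mul_mul_eq_self {γ : ι} {x b : A} (hx : x ∈ 𝒜 γ) (hxbx : x * b * x = x) :
    ∃ c ∈ 𝒜 (-γ), x * c * x = x := by
  refine ⟨decompose 𝒜 b (-γ), SetLike.coe_mem _, ?_⟩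
  rw [← coe_decompose_mul_mul_of_mem 𝒜 hx, hxbx, decompose_of_mem_same 𝒜 hx]

end DirectSum

section InnerInverse

variable [Ring R] {x b : R}

theorem isIdempotentElem_mul_of_mul_mul_eq_self (hxbx : x * b * x = x) :
    IsIdempotentElem (x * b) := by
  rw [IsIdempotentElem, ← mul_assoc, hxbx]

theorem isIdempotentElem_mul_of_mul_mul_eq_self' (hxbx : x * b * x = x) :
    IsIdempotentElem (b * x) := by
  rw [IsIdempotentElem, mul_assoc, ← mul_assoc x, hxbx]

theorem one_sub_mul_mul_mul_eq_zero (hxbx : x * b * x = x) (hc : ∀ r, x * b * r = r * (x * b))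
    (r : R) : (1 - x * b) * r * x = 0 := by
  rw [sub_mul, sub_mul, one_mul, hc, mul_assoc, mul_assoc, ← mul_assoc x, hxbx, sub_self]

theorem mul_mul_one_sub_mul_eq_zero (hxbx : x * b * x = x) (hc : ∀ r, b * x * r = r * (b * x))
    (r : R) : x * r * (1 - b * x) = 0 := by
  rw [mul_sub, mul_one, mul_assoc, ← hc, ← mul_assoc, ← mul_assoc, hxbx, sub_self]

end InnerInverse

/-- A graded prime, graded von Neumann regular, graded abelian ring is
a graded division ring: every nonzero homogeneous element is invertible. -/
theorem gradedPrime_regular_abelian_is_gradedDivisionRing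
    [DecidableEq ι] [AddCommGroup ι] [Ring R] (𝒜 : ι → AddSubgroup R) [GradedRing 𝒜]
    (hprime : ∀ x y : R, IsHomog 𝒜 x → IsHomog 𝒜 y →
      (∀ r : R, x * r * y = 0) → x = 0 ∨ y = 0)
    (hreg : GradedVNRegular 𝒜)
    (habelian : ∀ e : R, IsHomog 𝒜 e → e * e = e → ∀ r : R, e * r = r * e) :
    ∀ x : R, IsHomog 𝒜 x → x ≠ 0 → ∃ y : R, x * y = 1 ∧ y * x = 1 := by
  rintro x ⟨γ, hx⟩ hx0
  obtain ⟨b₀, hxb₀x⟩ := hreg x ⟨γ, hx⟩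
  obtain ⟨b, hb, hxbx⟩ := DirectSum.exists_mem_neg_mul_mul_eq_self 𝒜 hx hxb₀x
  have hxb : x * b ∈ 𝒜 0 := by simpa using SetLike.mul_mem_graded hx hb
  have hbx : b * x ∈ 𝒜 0 := by simpa using SetLike.mul_mem_graded hb hx
  have h1 : (1 : R) ∈ 𝒜 0 := SetLike.one_mem_graded 𝒜
  refine ⟨b, ?_, ?_⟩
  · have hcentral := habelian _ ⟨0, hxb⟩ (isIdempotentElem_mul_of_mul_mul_eq_self hxbx)
    have hzero := hprime (1 - x * b) x ⟨0, sub_mem h1 hxb⟩ ⟨γ, hx⟩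
      (one_sub_mul_mul_mul_eq_zero hxbx hcentral)
    exact (sub_eq_zero.mp (hzero.resolve_right hx0)).symm
  · have hcentral := habelian _ ⟨0, hbx⟩ (isIdempotentElem_mul_of_mul_mul_eq_self' hxbx)
    have hzero := hprime x (1 - b * x) ⟨γ, hx⟩ ⟨0, sub_mem h1 hbx⟩
      (mul_mul_one_sub_mul_eq_zero hxbx hcentral)
    exact (sub_eq_zero.mp (hzero.resolve_left hx0)).symm
end

section
/- Let R be a Γ-graded von Neumann regular graded right self-injective ring which is graded prime (for homogeneous x, y ∈ R, xRy = 0 implies x = 0 or y = 0) and contains a nonzero graded faithful graded abelian idempotent e. Then every nonzero homogeneous element of the corner ring eRe is invertible in eRe (eRe is a graded division ring), and eR is a graded simple right R-module, i.e. eR ≠ 0 and the only graded right ideals of R contained in eR are 0 and eR; in particular the graded socle of R_R is nonzero. -/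
/- Setting: `Γ = ι` an additive abelian group, `R` a `ι`-graded ring with identity,
with homogeneous components the additive subgroups `𝒜 γ`. -/

variable {ι R : Type*}

section Defs
variable [DecidableEq ι] [AddCommGroup ι] [Ring R] (𝒜 : ι → AddSubgroup R) [GradedRing 𝒜]

/-- A homogeneous idempotent of `R`. -/
def IsHomogIdem (e : R) : Prop := IsHomog 𝒜 e ∧ e * e = e

/-- A graded abelian idempotent: every homogeneous idempotent of the corner ring `eRe`
is central in `eRe` (membership `f ∈ eRe` is expressed as `e * f * e = f`). -/
def GrAbelianIdem (e : R) : Prop :=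
  IsHomogIdem 𝒜 e ∧ ∀ f : R, IsHomog 𝒜 f → e * f * e = f → f * f = f →
    ∀ x : R, e * x * e = x → f * x = x * f

/-- A graded directly finite idempotent: for homogeneous `x, y ∈ eRe`,
`x * y = e` implies `y * x = e`. -/
def GrDirFinIdem (e : R) : Prop :=
  IsHomogIdem 𝒜 e ∧ ∀ x y : R, IsHomog 𝒜 x → IsHomog 𝒜 y →
    e * x * e = x → e * y * e = y → x * y = e → y * x = e

/-- A graded faithful idempotent: the only central homogeneous idempotent `y`
with `e * y = 0` is `y = 0`. -/
def GrFaithfulIdem (e : R) : Prop :=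
  IsHomogIdem 𝒜 e ∧ ∀ y : R, IsHomog 𝒜 y → y * y = y → (∀ r : R, y * r = r * y) →
    e * y = 0 → y = 0

end Defs

section Helpers
variable [DecidableEq ι] [AddCommGroup ι] [Ring R] (𝒜 : ι → AddSubgroup R) [GradedRing 𝒜]

/-- A nonzero homogeneous idempotent has degree zero. -/
lemma homogIdem_mem_zero {e : R} (hne : e ≠ 0) {γ : ι} (he : e ∈ 𝒜 γ) (hee : e * e = e) :
    e ∈ 𝒜 0 := by
  have h2 : e ∈ 𝒜 (γ + γ) := hee ▸ SetLike.mul_mem_graded he he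
  by_cases h : γ + γ = γ
  · have hγ : γ = 0 := add_right_cancel (h.trans (zero_add γ).symm)
    exact hγ ▸ he
  · exfalso
    apply hne
    have h1 : (DirectSum.decompose 𝒜 e γ : R) = e := DirectSum.decompose_of_mem_same 𝒜 he
    have h0 : (DirectSum.decompose 𝒜 e γ : R) = 0 := DirectSum.decompose_of_mem_ne 𝒜 h2 h
    rw [← h1, h0]

/-- From an arbitrary inner inverse of a homogeneous element we can extract a
homogeneous inner inverse (the component of degree `-δ`). -/
lemma vn_component {δ : ι} {x : R} (hx : x ∈ 𝒜 δ) {y : R} (hxyx : x * y * x = x) :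
    x * (DirectSum.decompose 𝒜 y (-δ) : R) * x = x := by
  classical
  have hsum : ∑ γ ∈ (DirectSum.decompose 𝒜 y).support,
      x * (DirectSum.decompose 𝒜 y γ : R) * x = x := by
    calc ∑ γ ∈ (DirectSum.decompose 𝒜 y).support, x * (DirectSum.decompose 𝒜 y γ : R) * x
        = x * (∑ γ ∈ (DirectSum.decompose 𝒜 y).support, (DirectSum.decompose 𝒜 y γ : R)) * x := by
          rw [Finset.mul_sum, Finset.sum_mul]
      _ = x * y * x := by rw [DirectSum.sum_support_decompose 𝒜 y]
      _ = x := hxyx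
  have hproj := congrArg (GradedRing.proj 𝒜 δ) hsum
  rw [map_sum] at hproj
  have hterm : ∀ γ ∈ (DirectSum.decompose 𝒜 y).support,
      γ ≠ -δ → GradedRing.proj 𝒜 δ (x * (DirectSum.decompose 𝒜 y γ : R) * x) = 0 := by
    intro γ _ hγ
    have hmem : x * (DirectSum.decompose 𝒜 y γ : R) * x ∈ 𝒜 (δ + γ + δ) :=
      SetLike.mul_mem_graded (SetLike.mul_mem_graded hx (SetLike.coe_mem _)) hx
    have hne : δ + γ + δ ≠ δ := by
      intro hc
      apply hγ
      have h1 : δ + (γ + δ) = δ + 0 := by rw [add_zero, ← add_assoc]; exact hc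
      exact eq_neg_of_add_eq_zero_left (add_left_cancel h1)
    rw [GradedRing.proj_apply, DirectSum.decompose_of_mem_ne 𝒜 hmem hne]
  have hout : ((DirectSum.decompose 𝒜 y).support.sum
      fun γ => GradedRing.proj 𝒜 δ (x * (DirectSum.decompose 𝒜 y γ : R) * x)) =
      GradedRing.proj 𝒜 δ (x * (DirectSum.decompose 𝒜 y (-δ) : R) * x) := by
    apply Finset.sum_eq_single
    · exact hterm
    · intro hns
      have : (DirectSum.decompose 𝒜 y (-δ) : R) = 0 := by
        rw [DFinsupp.notMem_support_iff] at hns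
        rw [hns]; rfl
      rw [this, mul_zero, zero_mul, map_zero]
  rw [hout] at hproj
  have hmem : x * (DirectSum.decompose 𝒜 y (-δ) : R) * x ∈ 𝒜 δ := by
    have := SetLike.mul_mem_graded
      (SetLike.mul_mem_graded hx (SetLike.coe_mem (DirectSum.decompose 𝒜 y (-δ)))) hx
    have hδ : δ + -δ + δ = δ := by abel
    rwa [hδ] at this
  rw [GradedRing.proj_apply, DirectSum.decompose_of_mem_same 𝒜 hmem,
    GradedRing.proj_apply, DirectSum.decompose_of_mem_same 𝒜 hx] at hproj
  exact hproj

/-- If `x * r * e ≠ 0` then some homogeneous component of `r` works as well. -/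
lemma exists_homog_factor {x e r : R} (h : x * r * e ≠ 0) :
    ∃ γ : ι, x * (DirectSum.decompose 𝒜 r γ : R) * e ≠ 0 := by
  classical
  by_contra hc
  push_neg at hc
  apply h
  calc x * r * e
      = x * (∑ γ ∈ (DirectSum.decompose 𝒜 r).support, (DirectSum.decompose 𝒜 r γ : R)) * e := by
        rw [DirectSum.sum_support_decompose 𝒜 r]
    _ = ∑ γ ∈ (DirectSum.decompose 𝒜 r).support, x * (DirectSum.decompose 𝒜 r γ : R) * e := by
        rw [Finset.mul_sum, Finset.sum_mul]
    _ = 0 := Finset.sum_eq_zero fun γ _ => hc γ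

/-- A nonzero element has a nonzero homogeneous component. -/
lemma exists_nonzero_component {x : R} (h : x ≠ 0) :
    ∃ γ : ι, (DirectSum.decompose 𝒜 x γ : R) ≠ 0 := by
  classical
  by_contra hc
  push_neg at hc
  apply h
  rw [← DirectSum.sum_support_decompose 𝒜 x]
  exact Finset.sum_eq_zero fun γ _ => hc γ

/-- Core lemma: in a graded regular graded prime ring with a graded abelian
idempotent `e`, every nonzero homogeneous element of `eRe` is invertible in `eRe`. -/
lemma corner_inverse (hreg : GradedVNRegular 𝒜)
    (hprime : ∀ x y : R, IsHomog 𝒜 x → IsHomog 𝒜 y →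
      (∀ r : R, x * r * y = 0) → x = 0 ∨ y = 0)
    {e : R} (hne : e ≠ 0) (hab : GrAbelianIdem 𝒜 e) :
    ∀ x : R, IsHomog 𝒜 x → e * x * e = x → x ≠ 0 →
      ∃ y : R, IsHomog 𝒜 y ∧ e * y * e = y ∧ x * y = e ∧ y * x = e := by
  obtain ⟨⟨⟨γe, heγ⟩, hee⟩, habel⟩ := hab
  have he0 : e ∈ 𝒜 0 := homogIdem_mem_zero 𝒜 hne heγ hee
  intro x ⟨δ, hx⟩ hxe hx0
  have hex : e * x = x := by
    conv_lhs => rw [← hxe]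
    rw [← mul_assoc, ← mul_assoc, hee, hxe]
  have hxe' : x * e = x := by
    conv_lhs => rw [← hxe]
    rw [mul_assoc, mul_assoc, hee, ← mul_assoc, hxe]
  obtain ⟨y0, hy0⟩ := hreg x ⟨δ, hx⟩
  set y1 : R := (DirectSum.decompose 𝒜 y0 (-δ) : R) with hy1def
  have hy1mem : y1 ∈ 𝒜 (-δ) := SetLike.coe_mem _
  have hxy1x : x * y1 * x = x := vn_component 𝒜 hx hy0
  set y : R := e * y1 * e with hydef
  have hymem : y ∈ 𝒜 (-δ) := by
    have := SetLike.mul_mem_graded (SetLike.mul_mem_graded he0 hy1mem) he0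
    have h0 : (0 : ι) + -δ + 0 = -δ := by abel
    rwa [h0] at this
  have heye : e * y * e = y := by
    rw [hydef, ← mul_assoc, ← mul_assoc, hee, mul_assoc (e * y1), hee]
  have hxyx : x * y * x = x := by
    rw [hydef]
    calc x * (e * y1 * e) * x = (x * e) * y1 * (e * x) := by simp only [mul_assoc]
      _ = x * y1 * x := by rw [hex, hxe']
      _ = x := hxy1x
  have hye : y * e = y := by rw [hydef, mul_assoc (e * y1), hee]
  have hey : e * y = y := by rw [hydef, ← mul_assoc, ← mul_assoc, hee]
  -- g = x * y is a homogeneous idempotent of eRe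
  have hgmem : x * y ∈ 𝒜 0 := by
    have := SetLike.mul_mem_graded hx hymem
    have h0 : δ + -δ = 0 := by abel
    rwa [h0] at this
  have hgg : (x * y) * (x * y) = x * y := by
    calc (x * y) * (x * y) = (x * y * x) * y := by simp only [mul_assoc]
      _ = x * y := by rw [hxyx]
  have hege : e * (x * y) * e = x * y := by
    rw [← mul_assoc, hex, mul_assoc, hye]
  have hgcentral := habel (x * y) ⟨0, hgmem⟩ hege hgg
  -- (e - x*y) * r * x = 0 for all r
  have hkey1 : ∀ r : R, (e - x * y) * r * x = 0 := by
    intro r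
    have hge : (x * y) * e = x * y := by rw [mul_assoc, hye]
    have hge' : (e - x * y) * e = e - x * y := by rw [sub_mul, hee, hge]
    have h1 : (e - x * y) * r * x = (e - x * y) * (e * r * e) * x := by
      calc (e - x * y) * r * x = ((e - x * y) * e) * r * (e * x) := by rw [hge', hex]
        _ = (e - x * y) * (e * r * e) * x := by simp only [mul_assoc]
    have hc : (x * y) * (e * r * e) = (e * r * e) * (x * y) :=
      hgcentral (e * r * e) (by rw [← mul_assoc, ← mul_assoc, hee, mul_assoc (e*r), hee])
    have hc' : e * (e * r * e) = (e * r * e) * e := by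
      rw [← mul_assoc, ← mul_assoc, hee, mul_assoc (e*r), hee]
    have h2 : (e - x * y) * (e * r * e) * x = (e * r * e) * ((e - x * y) * x) := by
      rw [sub_mul, hc, hc', ← mul_sub, mul_assoc]
    have h3 : (e - x * y) * x = 0 := by
      rw [sub_mul, hex, hxyx, sub_self]
    rw [h1, h2, h3, mul_zero]
  have hgE : e - x * y = 0 ∨ x = 0 :=
    hprime (e - x * y) x ⟨0, AddSubgroup.sub_mem _ he0 hgmem⟩ ⟨δ, hx⟩ hkey1
  have hxy : x * y = e := by
    rcases hgE with h | h
    · exact (sub_eq_zero.mp h).symm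
    · exact absurd h hx0
  -- k = y * x is a homogeneous idempotent of eRe
  have hkmem : y * x ∈ 𝒜 0 := by
    have := SetLike.mul_mem_graded hymem hx
    have h0 : -δ + δ = 0 := by abel
    rwa [h0] at this
  have hkk : (y * x) * (y * x) = y * x := by
    calc (y * x) * (y * x) = y * (x * y * x) := by simp only [mul_assoc]
      _ = y * x := by rw [hxyx]
  have heke : e * (y * x) * e = y * x := by
    rw [← mul_assoc, hey, mul_assoc, hxe']
  have hkcentral := habel (y * x) ⟨0, hkmem⟩ heke hkk
  have hkey2 : ∀ r : R, x * r * (e - y * x) = 0 := by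
    intro r
    have hek : e * (y * x) = y * x := by rw [← mul_assoc, hey]
    have hek' : e * (e - y * x) = e - y * x := by rw [mul_sub, hee, hek]
    have h1 : x * r * (e - y * x) = x * ((e * r * e) * (e - y * x)) := by
      calc x * r * (e - y * x) = (x * e) * r * (e * (e - y * x)) := by rw [hxe', hek']
        _ = x * ((e * r * e) * (e - y * x)) := by simp only [mul_assoc]
    have hc : (y * x) * (e * r * e) = (e * r * e) * (y * x) :=
      hkcentral (e * r * e) (by rw [← mul_assoc, ← mul_assoc, hee, mul_assoc (e*r), hee])
    have hc' : e * (e * r * e) = (e * r * e) * e := by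
      rw [← mul_assoc, ← mul_assoc, hee, mul_assoc (e*r), hee]
    have h2 : (e * r * e) * (e - y * x) = (e - y * x) * (e * r * e) := by
      rw [mul_sub, sub_mul, hc, hc']
    have h3 : x * (e - y * x) = 0 := by
      rw [mul_sub, hxe', ← mul_assoc, hxy, hex, sub_self]
    rw [h1, h2, ← mul_assoc, h3, zero_mul]
  have hkE : x = 0 ∨ e - y * x = 0 :=
    hprime x (e - y * x) ⟨δ, hx⟩ ⟨0, AddSubgroup.sub_mem _ he0 hkmem⟩ hkey2
  have hyx : y * x = e := by
    rcases hkE with h | h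
    · exact absurd h hx0
    · exact (sub_eq_zero.mp h).symm
  exact ⟨y, ⟨-δ, hymem⟩, heye, hxy, hyx⟩

end Helpers

/-- Let `R` be a graded von Neumann regular graded right self-injective
graded prime ring containing a nonzero graded faithful graded abelian idempotent `e`.
Then the corner `eRe` is a graded division ring (with identity `e`), and `eR` (encoded
as `{x | e * x = x}`) is a graded simple right `R`-module; in particular the graded
socle of `R` is nonzero. -/
theorem corner_division_and_simple_of_faithful_abelian
    [DecidableEq ι] [AddCommGroup ι] [Ring R] (𝒜 : ι → AddSubgroup R) [GradedRing 𝒜]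
    (hreg : GradedVNRegular 𝒜) (hinj : GradedSelfInjective 𝒜)
    (hprime : ∀ x y : R, IsHomog 𝒜 x → IsHomog 𝒜 y →
      (∀ r : R, x * r * y = 0) → x = 0 ∨ y = 0)
    (e : R) (hne : e ≠ 0) (hfa : GrFaithfulIdem 𝒜 e) (hab : GrAbelianIdem 𝒜 e) :
    (∀ x : R, IsHomog 𝒜 x → e * x * e = x → x ≠ 0 →
        ∃ y : R, IsHomog 𝒜 y ∧ e * y * e = y ∧ x * y = e ∧ y * x = e) ∧
      (∃ x : R, e * x = x ∧ x ≠ 0) ∧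
      (∀ J : Set R, IsGradedRightIdeal 𝒜 J → J ⊆ {x : R | e * x = x} →
        J = {(0 : R)} ∨ J = {x : R | e * x = x}) := by
  obtain ⟨⟨⟨γe, heγ⟩, hee⟩, habel⟩ := hab
  have he0 : e ∈ 𝒜 0 := homogIdem_mem_zero 𝒜 hne heγ hee
  have hinv := corner_inverse 𝒜 hreg hprime hne ⟨⟨⟨γe, heγ⟩, hee⟩, habel⟩
  refine ⟨hinv, ⟨e, hee, hne⟩, ?_⟩
  intro J hJ hJsub
  by_cases hJ0 : ∀ x ∈ J, x = 0
  · left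
    ext z
    simp only [Set.mem_singleton_iff]
    exact ⟨fun hz => hJ0 z hz, fun hz => hz ▸ hJ.1.1⟩
  · right
    push_neg at hJ0
    obtain ⟨x0, hx0J, hx0ne⟩ := hJ0
    obtain ⟨γ, hγne⟩ := exists_nonzero_component 𝒜 hx0ne
    set x : R := (DirectSum.decompose 𝒜 x0 γ : R) with hxdef
    have hxJ : x ∈ J := hJ.2 x0 hx0J γ
    have hxmem : x ∈ 𝒜 γ := SetLike.coe_mem _
    have hex : e * x = x := hJsub hxJ
    -- find a homogeneous r with x * r * e ≠ 0
    have hxre : ∃ r : R, x * r * e ≠ 0 := by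
      by_contra hc
      push_neg at hc
      rcases hprime x e ⟨γ, hxmem⟩ ⟨0, he0⟩ hc with h | h
      · exact hγne h
      · exact hne h
    obtain ⟨r0, hr0⟩ := hxre
    obtain ⟨γ', hγ'⟩ := exists_homog_factor 𝒜 hr0
    set r : R := (DirectSum.decompose 𝒜 r0 γ' : R) with hrdef
    have hrmem : r ∈ 𝒜 γ' := SetLike.coe_mem _
    set z : R := x * r * e with hzdef
    have hzmem : z ∈ 𝒜 (γ + γ' + 0) :=
      SetLike.mul_mem_graded (SetLike.mul_mem_graded hxmem hrmem) he0
    have heze : e * z * e = z := by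
      rw [hzdef, ← mul_assoc, ← mul_assoc, hex, mul_assoc (x * r), hee]
    obtain ⟨y, _, _, hzy, _⟩ := hinv z ⟨γ + γ' + 0, hzmem⟩ heze hγ'
    have heJ : e ∈ J := by
      have : x * (r * e * y) ∈ J := hJ.1.2.2 x hxJ (r * e * y)
      have heq : x * (r * e * y) = e := by
        have h : x * (r * e * y) = x * r * e * y := by simp only [mul_assoc]
        rw [h]; exact hzy
      rwa [heq] at this
    ext w
    constructor
    · intro hw; exact hJsub hw
    · intro hw
      have : e * w ∈ J := hJ.1.2.2 e heJ w
      rwa [hw] at this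
end
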